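/- arXiv:1606.04377 — 9 statements merged into one kernel-verified Lean document; each statement's English description precedes it below -/
import Mathlib

section
/- Let X be a real Banach space, K ⊆ X a cone with nonempty interior, and L : X → X a positive bounded linear operator. Suppose r ∈ ℝ is an eigenvalue of L with an eigenvector x in the interior of K (L x = r x). Then for every real s > r there is no nonzero v ∈ X with L v = s v; that is, L has no real eigenvalue larger than r. -/
set_option maxHeartbeats 1000000

/-- Let `X` be a real Banach space, `K ⊆ X` a cone with nonempty interior,
and `L : X →L[ℝ] X` a positive operator (`L(K) ⊆ K`).  If `r ∈ ℝ` is an eigenvalue of `L`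
with an eigenvector `x ∈ interior K`, then `L` has no real eigenvalue `s > r`. -/
theorem no_eigenvalue_above_interior_eigenvalue
    {X : Type*} [NormedAddCommGroup X] [NormedSpace ℝ X] [CompleteSpace X]
    (K : Set X)
    (hKne : K.Nonempty)
    (hKclosed : IsClosed K)
    (hKconv : Convex ℝ K)
    (hKscale : ∀ t : ℝ, 0 ≤ t → ∀ y ∈ K, t • y ∈ K)
    (hKsalient : ∀ y ∈ K, -y ∈ K → y = 0)
    (hKint : (interior K).Nonempty)
    (L : X →L[ℝ] X)
    (hLpos : ∀ y ∈ K, L y ∈ K)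
    (r : ℝ) (x : X) (hx : x ∈ interior K) (hx0 : x ≠ 0) (hLx : L x = r • x) :
    ∀ s : ℝ, r < s → ∀ v : X, v ≠ 0 → L v ≠ s • v := by
  intro s hrs v hv0 hLv
  have hxK : x ∈ K := interior_subset hx
  -- r ≥ 0
  have hr0 : 0 ≤ r := by
    by_contra h
    push_neg at h
    have h1 : r • x ∈ K := hLx ▸ hLpos x hxK
    have h2 : (-r) • x ∈ K := hKscale (-r) (by linarith) x hxK
    have h3 : r • x = 0 := hKsalient _ h1 (by rw [← neg_smul]; exact h2)
    rcases smul_eq_zero.mp h3 with h' | h'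
    · exact absurd h' (by linarith)
    · exact hx0 h'
  have hs0 : 0 < s := lt_of_le_of_lt hr0 hrs
  -- pick w ∈ {v, -v} with w ∉ K
  obtain ⟨w, hw0, hwK, hLw⟩ : ∃ w : X, w ≠ 0 ∧ w ∉ K ∧ L w = s • w := by
    by_cases hvK : v ∈ K
    · by_cases hnvK : -v ∈ K
      · exact absurd (hKsalient v hvK hnvK) hv0
      · exact ⟨-v, neg_ne_zero.mpr hv0, hnvK, by simp [hLv]⟩
    · exact ⟨v, hv0, hvK, hLv⟩
  obtain ⟨ε, hε, hball⟩ := Metric.isOpen_iff.mp isOpen_interior x hx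
  have hwnorm : 0 < ‖w‖ := norm_pos_iff.mpr hw0
  set δ := ε / (2 * ‖w‖) with hδdef
  have hδ : 0 < δ := by positivity
  have hmem : x + δ • w ∈ K := by
    apply interior_subset
    apply hball
    rw [Metric.mem_ball, dist_eq_norm]
    have : x + δ • w - x = δ • w := by abel
    rw [this, norm_smul, Real.norm_eq_abs, abs_of_pos hδ, hδdef]
    rw [div_mul_eq_mul_div, mul_comm]
    rw [div_lt_iff₀ (by positivity)]
    nlinarith
  set T := {t : ℝ | 0 ≤ t ∧ x + t • w ∈ K} with hTdef
  have hTne : T.Nonempty := ⟨δ, hδ.le, hmem⟩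
  have hTclosed : IsClosed T := by
    have : T = Set.Ici (0:ℝ) ∩ (fun t : ℝ => x + t • w) ⁻¹' K := by
      ext t; simp [hTdef, Set.mem_Ici]
    rw [this]
    exact isClosed_Ici.inter (hKclosed.preimage (by continuity))
  have hTbdd : BddAbove T := by
    by_contra h
    have hseq : ∀ n : ℕ, ∃ t, t ∈ T ∧ ((n : ℝ) + 1) ≤ t := by
      intro n
      rcases not_bddAbove_iff.mp h ((n : ℝ) + 1) with ⟨t, htT, hlt⟩
      exact ⟨t, htT, hlt.le⟩
    choose t ht hnt using hseq
    have htpos : ∀ n, 0 < t n := fun n => lt_of_lt_of_le (by positivity) (hnt n)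
    have hmemn : ∀ n, (t n)⁻¹ • x + w ∈ K := by
      intro n
      have h1 : (t n)⁻¹ • (x + t n • w) ∈ K :=
        hKscale _ (inv_nonneg.mpr (htpos n).le) _ (ht n).2
      have h2 : (t n)⁻¹ • (x + t n • w) = (t n)⁻¹ • x + w := by
        rw [smul_add, smul_smul, inv_mul_cancel₀ (htpos n).ne', one_smul]
      rwa [h2] at h1
    have htt : Filter.Tendsto t Filter.atTop Filter.atTop :=
      Filter.tendsto_atTop_mono hnt
        (Filter.tendsto_atTop_add_const_right _ 1 tendsto_natCast_atTop_atTop)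
    have hinv : Filter.Tendsto (fun n => (t n)⁻¹) Filter.atTop (nhds 0) :=
      Filter.Tendsto.inv_tendsto_atTop htt
    have hlim : Filter.Tendsto (fun n => (t n)⁻¹ • x + w) Filter.atTop (nhds w) := by
      have := (hinv.smul_const x).add_const w
      simpa using this
    exact hwK (hKclosed.mem_of_tendsto hlim (Filter.Eventually.of_forall hmemn))
  set c := sSup T with hcdef
  have hcT : c ∈ T := hTclosed.csSup_mem hTne hTbdd
  have hcδ : δ ≤ c := le_csSup hTbdd ⟨hδ.le, hmem⟩
  have hc0 : 0 < c := lt_of_lt_of_le hδ hcδ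
  have hLK : L (x + c • w) ∈ K := hLpos _ hcT.2
  have hLeq : L (x + c • w) = r • x + (c * s) • w := by
    rw [map_add, map_smul, hLx, hLw, smul_smul]
  rw [hLeq] at hLK
  rcases eq_or_lt_of_le hr0 with hr | hr
  · -- r = 0
    have h1 : (c * s) • w ∈ K := by rwa [← hr, zero_smul, zero_add] at hLK
    have hcs : 0 < c * s := by positivity
    have h2 : w ∈ K := by
      have := hKscale (c * s)⁻¹ (inv_nonneg.mpr hcs.le) _ h1
      rwa [smul_smul, inv_mul_cancel₀ hcs.ne', one_smul] at this
    exact hwK h2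
  · -- r > 0
    have h1 : r⁻¹ • (r • x + (c * s) • w) ∈ K :=
      hKscale _ (inv_nonneg.mpr hr.le) _ hLK
    have h2 : x + (c * s / r) • w ∈ K := by
      have : r⁻¹ • (r • x + (c * s) • w) = x + (c * s / r) • w := by
        rw [smul_add, smul_smul, smul_smul, inv_mul_cancel₀ hr.ne', one_smul,
          div_eq_inv_mul]
      rwa [this] at h1
    have hT2 : c * s / r ∈ T := ⟨by positivity, h2⟩
    have hle : c * s / r ≤ c := le_csSup hTbdd hT2
    have hgt : c < c * s / r := by
      rw [lt_div_iff₀ hr]; nlinarith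
    exact absurd hgt (not_lt.mpr hle)
end

section
/- Let X be a real Banach space, K ⊆ X a cone with nonempty interior, and L : X → X a strongly positive bounded linear operator. Suppose r > 0 and x ∈ K \ {0} satisfy L x = r x. Then x lies in the interior of K, and r is a geometrically simple eigenvalue of L: every v ∈ X with L v = r v is a scalar multiple of x (equivalently, ker(r·I − L) is one-dimensional, spanned by x). -/
open Pointwise

set_option maxHeartbeats 1000000


/-- Let `X` be a real Banach space, `K ⊆ X` a cone with nonempty interior,
and `L : X →L[ℝ] X` strongly positive (`L(K \ {0}) ⊆ interior K`).  If `r > 0` and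
`x ∈ K \ {0}` satisfy `L x = r x`, then `x ∈ interior K` and `r` is geometrically simple:
every `v` with `L v = r v` is a scalar multiple of `x`. -/
theorem strongly_positive_geometrically_simple
    {X : Type*} [NormedAddCommGroup X] [NormedSpace ℝ X] [CompleteSpace X]
    (K : Set X)
    (hKne : K.Nonempty)
    (hKclosed : IsClosed K)
    (hKconv : Convex ℝ K)
    (hKscale : ∀ t : ℝ, 0 ≤ t → ∀ y ∈ K, t • y ∈ K)
    (hKsalient : ∀ y ∈ K, -y ∈ K → y = 0)
    (hKint : (interior K).Nonempty)
    (L : X →L[ℝ] X)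
    (hLsp : ∀ y ∈ K, y ≠ 0 → L y ∈ interior K)
    (r : ℝ) (hr : 0 < r)
    (x : X) (hxK : x ∈ K) (hx0 : x ≠ 0) (hLx : L x = r • x) :
    x ∈ interior K ∧ ∀ v : X, L v = r • v → ∃ c : ℝ, v = c • x := by
  -- positive scalar multiples of interior points stay in the interior
  have hsmulint : ∀ t : ℝ, 0 < t → ∀ y ∈ interior K, t • y ∈ interior K := by
    intro t ht y hy
    have h1 : t • y ∈ t • interior K := Set.smul_mem_smul_set hy
    rw [← interior_smul₀ (ne_of_gt ht)] at h1
    refine interior_mono ?_ h1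
    rintro _ ⟨z, hz, rfl⟩
    exact hKscale t ht.le z hz
  -- x ∈ interior K
  have hxint : x ∈ interior K := by
    have h1 : L x ∈ interior K := hLsp x hxK hx0
    rw [hLx] at h1
    have := hsmulint r⁻¹ (by positivity) _ h1
    rwa [inv_smul_smul₀ hr.ne'] at this
  refine ⟨hxint, ?_⟩
  -- key lemma: if the ray x - t v stays in K only for bounded t, then v ∥ x
  have key : ∀ v : X, v ≠ 0 → L v = r • v →
      BddAbove {t : ℝ | 0 ≤ t ∧ x - t • v ∈ K} → ∃ c : ℝ, v = c • x := by
    intro v hv0 hLv hbdd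
    set A : Set ℝ := {t : ℝ | 0 ≤ t ∧ x - t • v ∈ K} with hA
    have hAne : A.Nonempty := ⟨0, le_refl 0, by simpa using hxK⟩
    set t₀ : ℝ := sSup A with ht₀
    have ht₀0 : 0 ≤ t₀ := le_csSup hbdd ⟨le_refl 0, by simpa using hxK⟩
    -- t₀ > 0
    obtain ⟨ε, hε, hball⟩ := Metric.mem_nhds_iff.mp (mem_interior_iff_mem_nhds.mp hxint)
    have hballK : Metric.ball x ε ⊆ K := hball
    have hδmem : ∀ δ : ℝ, 0 < δ → δ * ‖v‖ < ε → δ ∈ A := by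
      intro δ hδ hδε
      refine ⟨hδ.le, hballK ?_⟩
      rw [Metric.mem_ball, dist_eq_norm]
      simpa [norm_smul, abs_of_pos hδ] using hδε
    have hδpos : (0:ℝ) < ε / (2 * (‖v‖ + 1)) := by positivity
    have hδsmall : ε / (2 * (‖v‖ + 1)) * ‖v‖ < ε := by
      rw [div_mul_eq_mul_div, div_lt_iff₀ (by positivity)]
      have h1 : ‖v‖ < 2 * (‖v‖ + 1) := by nlinarith [norm_nonneg v]
      nlinarith [norm_nonneg v]
    have ht₀pos : 0 < t₀ :=
      lt_of_lt_of_le hδpos (le_csSup hbdd (hδmem _ hδpos hδsmall))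
    -- w := x - t₀ • v ∈ K
    have hwK : x - t₀ • v ∈ K := by
      have hC : IsClosed {t : ℝ | x - t • v ∈ K} :=
        hKclosed.preimage (by continuity)
      have h1 : t₀ ∈ closure A := csSup_mem_closure hAne hbdd
      exact closure_minimal (fun t ht => ht.2) hC h1
    set w : X := x - t₀ • v with hw
    -- w = 0
    have hw0 : w = 0 := by
      by_contra hwne
      have hLw : L w = r • w := by
        simp only [hw, map_sub, map_smul, hLx, hLv, smul_sub, smul_comm t₀ r]
      have hwint : w ∈ interior K := by
        have h1 : L w ∈ interior K := hLsp w hwK hwne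
        rw [hLw] at h1
        have := hsmulint r⁻¹ (by positivity) _ h1
        rwa [inv_smul_smul₀ hr.ne'] at this
      obtain ⟨ε', hε', hball'⟩ := Metric.mem_nhds_iff.mp (mem_interior_iff_mem_nhds.mp hwint)
      have hball'K : Metric.ball w ε' ⊆ K := hball'
      set δ : ℝ := ε' / (2 * (‖v‖ + 1)) with hδdef
      have hδpos' : 0 < δ := by positivity
      have hmem : t₀ + δ ∈ A := by
        refine ⟨by linarith, ?_⟩
        have : x - (t₀ + δ) • v = w - δ • v := by
          rw [hw]; rw [add_smul]; abel
        rw [this]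
        refine hball'K ?_
        rw [Metric.mem_ball, dist_eq_norm]
        have hsm : δ * ‖v‖ < ε' := by
          rw [hδdef, div_mul_eq_mul_div, div_lt_iff₀ (by positivity)]
          nlinarith [norm_nonneg v]
        simpa [norm_smul, abs_of_pos hδpos'] using hsm
      have := le_csSup hbdd hmem
      linarith
    -- conclude
    have hx : x = t₀ • v := by
      rw [hw] at hw0
      exact sub_eq_zero.mp hw0
    refine ⟨t₀⁻¹, ?_⟩
    rw [hx, inv_smul_smul₀ ht₀pos.ne']
  -- if the ray is unbounded, then -v ∈ K
  have negmem : ∀ v : X, ¬ BddAbove {t : ℝ | 0 ≤ t ∧ x - t • v ∈ K} → -v ∈ K := by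
    intro v hub
    have hf : ∀ n : ℕ, ∃ t : ℝ, (0 ≤ t ∧ x - t • v ∈ K) ∧ (n : ℝ) < t := by
      intro n
      obtain ⟨t, ht, hnt⟩ := not_bddAbove_iff.mp hub (n : ℝ)
      exact ⟨t, ht, hnt⟩
    choose f hfA hfgt using hf
    have hfpos : ∀ n : ℕ, 0 < f n := fun n =>
      lt_of_le_of_lt (Nat.cast_nonneg n) (hfgt n)
    have hmemK : ∀ n : ℕ, (f n)⁻¹ • x - v ∈ K := by
      intro n
      have h1 := hKscale (f n)⁻¹ (inv_nonneg.mpr (hfpos n).le) (x - f n • v) (hfA n).2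
      rwa [smul_sub, smul_smul, inv_mul_cancel₀ (hfpos n).ne', one_smul] at h1
    have htend : Filter.Tendsto (fun n => (f n)⁻¹ • x - v) Filter.atTop (nhds (-v)) := by
      have h1 : Filter.Tendsto f Filter.atTop Filter.atTop :=
        Filter.tendsto_atTop_mono (fun n => (hfgt n).le) tendsto_natCast_atTop_atTop
      have h2 : Filter.Tendsto (fun n => (f n)⁻¹) Filter.atTop (nhds 0) :=
        (tendsto_inv_atTop_zero).comp h1
      have h3 : Filter.Tendsto (fun n => (f n)⁻¹ • x) Filter.atTop (nhds ((0:ℝ) • x)) :=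
        h2.smul_const x
      have h4 : Filter.Tendsto (fun n => (f n)⁻¹ • x - v) Filter.atTop (nhds ((0:ℝ) • x - v)) :=
        h3.sub_const v
      simpa using h4
    exact hKclosed.mem_of_tendsto htend (Filter.Eventually.of_forall hmemK)
  -- main case split
  intro v hLv
  by_cases hv0 : v = 0
  · exact ⟨0, by simp [hv0]⟩
  by_cases hb : BddAbove {t : ℝ | 0 ≤ t ∧ x - t • v ∈ K}
  · exact key v hv0 hLv hb
  have hnegv : -v ∈ K := negmem v hb
  by_cases hb2 : BddAbove {t : ℝ | 0 ≤ t ∧ x - t • (-v) ∈ K}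
  · obtain ⟨c, hc⟩ := key (-v) (by simpa using hv0)
      (by rw [map_neg, hLv, smul_neg]) hb2
    exact ⟨-c, by rw [neg_smul, ← hc, neg_neg]⟩
  have hvK : v ∈ K := by simpa using negmem (-v) hb2
  exact absurd (hKsalient v hvK hnegv) hv0
end

section
/- Let X be a real Banach space, K ⊆ X a cone with nonempty interior, and L : X → X a strongly positive bounded linear operator. Suppose r > 0 and x ∈ K \ {0} satisfy L x = r x. Then r is an algebraically simple eigenvalue of L: ker((r·I − L)²) = ker(r·I − L), i.e., every v ∈ X with (r·I − L)² v = 0 already satisfies L v = r v. -/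
/-- Let `X` be a real Banach space, `K ⊆ X` a cone with nonempty interior,
and `L : X →L[ℝ] X` strongly positive (`L(K \ {0}) ⊆ interior K`).  If `r > 0` and
`x ∈ K \ {0}` satisfy `L x = r x`, then `r` is algebraically simple:
`ker((r·I − L)²) = ker(r·I − L)`, i.e. every `v` with `(r·I − L)² v = 0` already satisfies
`L v = r v`. -/
theorem strongly_positive_algebraically_simple
    {X : Type*} [NormedAddCommGroup X] [NormedSpace ℝ X] [CompleteSpace X]
    (K : Set X)
    (hKne : K.Nonempty)
    (hKclosed : IsClosed K)
    (hKconv : Convex ℝ K)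
    (hKscale : ∀ t : ℝ, 0 ≤ t → ∀ y ∈ K, t • y ∈ K)
    (hKsalient : ∀ y ∈ K, -y ∈ K → y = 0)
    (hKint : (interior K).Nonempty)
    (L : X →L[ℝ] X)
    (hLsp : ∀ y ∈ K, y ≠ 0 → L y ∈ interior K)
    (r : ℝ) (hr : 0 < r)
    (x : X) (hxK : x ∈ K) (hx0 : x ≠ 0) (hLx : L x = r • x) :
    ∀ v : X, r • (r • v - L v) - L (r • v - L v) = 0 → L v = r • v := by
  intro v hv
  obtain ⟨y0, hy0⟩ := hKne
  have hK0 : (0:X) ∈ K := by simpa using hKscale 0 le_rfl y0 hy0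
  have hr' : r ≠ 0 := ne_of_gt hr
  -- L maps K into K
  have hLK : ∀ y ∈ K, L y ∈ K := by
    intro y hy
    by_cases h : y = 0
    · simpa [h] using hK0
    · exact interior_subset (hLsp y hy h)
  -- powers of L map K into K
  have hLKn : ∀ (n : ℕ), ∀ y ∈ K, (L ^ n) y ∈ K := by
    intro n
    induction n with
    | zero => intro y hy; simpa using hy
    | succ n ih =>
      intro y hy
      rw [pow_succ, ContinuousLinearMap.mul_apply]
      exact ih _ (hLK y hy)
  -- x is in the interior of K
  have hxint : x ∈ interior K := by
    have h1 : L x ∈ interior K := hLsp x hxK hx0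
    rw [hLx] at h1
    obtain ⟨ε, hε, hball⟩ := Metric.mem_nhds_iff.1 (mem_interior_iff_mem_nhds.1 h1)
    have hball' : Metric.ball x (ε / r) ⊆ K := by
      intro z hz
      have hz' : r • z ∈ Metric.ball (r • x) ε := by
        rw [Metric.mem_ball, dist_eq_norm, ← smul_sub, norm_smul, Real.norm_eq_abs,
          abs_of_pos hr]
        rw [Metric.mem_ball, dist_eq_norm] at hz
        calc r * ‖z - x‖ < r * (ε / r) := by
              exact mul_lt_mul_of_pos_left hz hr
          _ = ε := by field_simp
      have := hKscale r⁻¹ (by positivity) _ (hball hz')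
      rwa [smul_smul, inv_mul_cancel₀ hr', one_smul] at this
    exact mem_interior.2 ⟨Metric.ball x (ε / r), hball', Metric.isOpen_ball,
      Metric.mem_ball_self (by positivity)⟩
  -- for any z, some positive multiple of x plus z lies in K
  have hshift : ∀ z : X, ∃ t : ℝ, 0 < t ∧ t • x + z ∈ K := by
    intro z
    obtain ⟨ε, hε, hball⟩ := Metric.mem_nhds_iff.1 (mem_interior_iff_mem_nhds.1 hxint)
    refine ⟨(‖z‖ + 1) / ε, by positivity, ?_⟩
    have ht : (0:ℝ) < (‖z‖ + 1) / ε := by positivity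
    have hmem : x + ((‖z‖ + 1) / ε)⁻¹ • z ∈ Metric.ball x ε := by
      rw [Metric.mem_ball, dist_eq_norm]
      have : ‖x + ((‖z‖ + 1) / ε)⁻¹ • z - x‖ = ((‖z‖ + 1) / ε)⁻¹ * ‖z‖ := by
        rw [add_sub_cancel_left, norm_smul, Real.norm_eq_abs, abs_of_pos (by positivity)]
      rw [this, inv_div, div_mul_eq_mul_div]
      rw [div_lt_iff₀ (by positivity)]
      nlinarith [norm_nonneg z]
    have := hKscale _ (le_of_lt ht) _ (hball hmem)
    rw [smul_add, smul_smul, mul_inv_cancel₀ (ne_of_gt ht), one_smul] at this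
    exact this
  -- the generalized eigenvector relation
  set w : X := r • v - L v with hw
  have hLw : L w = r • w := by
    have := sub_eq_zero.1 hv
    linear_combination (norm := module) -this
  -- key power formula
  have key : ∀ w' : X, L w' = r • w' → ∀ y : X, L y = r • y - w' →
      ∀ n : ℕ, (L ^ n) y = (r ^ n) • (y - ((n : ℝ) / r) • w') := by
    intro w' hw' y hy n
    induction n with
    | zero => simp
    | succ n ih =>
      rw [pow_succ', ContinuousLinearMap.mul_apply, ih, map_smul, map_sub, map_smul, hy, hw']
      push_cast
      have h1 : ((n : ℝ) + 1) / r * r = (n : ℝ) + 1 := by field_simp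
      match_scalars <;> field_simp <;> ring
  -- from the power formula: if y ∈ K and L y = r•y - w' with L w' = r•w', then -w' ∈ K
  have negK : ∀ w' : X, L w' = r • w' → ∀ y : X, L y = r • y - w' → y ∈ K → -w' ∈ K := by
    intro w' hw' y hy hyK
    by_contra hcon
    obtain ⟨ε, hε, hball⟩ := Metric.isOpen_iff.1 hKclosed.isOpen_compl _ hcon
    obtain ⟨n, hn⟩ := exists_nat_gt (max 1 (r * ‖y‖ / ε))
    have hn1 : (1:ℝ) < n := lt_of_le_of_lt (le_max_left _ _) hn
    have hn0 : (0:ℝ) < n := by linarith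
    have hmemn : y - ((n : ℝ) / r) • w' ∈ K := by
      have h1 := hLKn n y hyK
      rw [key w' hw' y hy n] at h1
      have h2 := hKscale ((r ^ n)⁻¹) (by positivity) _ h1
      rwa [smul_smul, inv_mul_cancel₀ (by positivity), one_smul] at h2
    have h3 := hKscale (r / n) (by positivity) _ hmemn
    rw [smul_sub, smul_smul] at h3
    have h4 : r / (n:ℝ) * ((n:ℝ) / r) = 1 := by field_simp
    rw [h4, one_smul] at h3
    have h5 : (r / (n:ℝ)) • y - w' ∈ Metric.ball (-w') ε := by
      rw [Metric.mem_ball, dist_eq_norm]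
      have : (r / (n:ℝ)) • y - w' - -w' = (r / (n:ℝ)) • y := by abel
      rw [this, norm_smul, Real.norm_eq_abs, abs_of_pos (by positivity)]
      rw [div_mul_eq_mul_div, div_lt_iff₀ hn0]
      have := (div_lt_iff₀ hε).1 (lt_of_le_of_lt (le_max_right 1 (r * ‖y‖ / ε)) hn)
      linarith
    exact hball h5 h3
  -- apply with y = t•x + v and w' = w
  obtain ⟨t, ht, htK⟩ := hshift v
  obtain ⟨t', ht', ht'K⟩ := hshift (-v)
  have e1 : L (t • x + v) = r • (t • x + v) - w := by
    rw [map_add, map_smul, hLx, hw]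
    module
  have e2 : L (t' • x + -v) = r • (t' • x + -v) - (-w) := by
    rw [map_add, map_smul, map_neg, hLx, hw]
    module
  have hLw' : L (-w) = r • (-w) := by rw [map_neg, hLw]; module
  have hnw : -w ∈ K := negK w hLw _ e1 htK
  have hpw : w ∈ K := by
    have := negK (-w) hLw' _ e2 ht'K
    rwa [neg_neg] at this
  have hw0 : w = 0 := hKsalient w hpw hnw
  have : r • v - L v = 0 := by rw [← hw, hw0]
  linear_combination (norm := module) -this
end

section
/- Let X be a real Banach space, K ⊆ X a cone with nonempty interior, and L : X → X a strongly positive bounded linear operator. Suppose r > 0 and x ∈ K \ {0} satisfy L x = r x. Then every real eigenvalue λ of L with λ ≠ r (i.e., L w = λ w for some nonzero w ∈ X) satisfies |λ| < r. -/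
/-- Let `X` be a real Banach space, `K ⊆ X` a cone with nonempty interior,
and `L : X →L[ℝ] X` strongly positive.  Suppose `r > 0` and `x ∈ K \ {0}` satisfy
`L x = r x`.  Then every real eigenvalue `λ ≠ r` of `L` satisfies `|λ| < r`. -/
theorem real_eigenvalues_strictly_dominated
    {X : Type*} [NormedAddCommGroup X] [NormedSpace ℝ X] [CompleteSpace X]
    (K : Set X)
    (hKne : K.Nonempty)
    (hKclosed : IsClosed K)
    (hKconv : Convex ℝ K)
    (hKscale : ∀ t : ℝ, 0 ≤ t → ∀ y ∈ K, t • y ∈ K)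
    (hKsalient : ∀ y ∈ K, -y ∈ K → y = 0)
    (hKint : (interior K).Nonempty)
    (L : X →L[ℝ] X)
    (hLsp : ∀ y ∈ K, y ≠ 0 → L y ∈ interior K)
    (r : ℝ) (hr : 0 < r)
    (x : X) (hxK : x ∈ K) (hx0 : x ≠ 0) (hLx : L x = r • x) :
    ∀ (lam : ℝ) (w : X), w ≠ 0 → L w = lam • w → lam ≠ r → |lam| < r := by
  -- positive scalings preserve the interior of K
  have hintK : ∀ c : ℝ, 0 < c → ∀ y ∈ interior K, c • y ∈ interior K := by
    intro c hc y hy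
    have hopen : IsOpenMap (fun z : X => c • z) :=
      (Homeomorph.smulOfNeZero c hc.ne').isOpenMap
    have h1 : IsOpen ((fun z : X => c • z) '' interior K) := hopen _ isOpen_interior
    have h2 : ((fun z : X => c • z) '' interior K) ⊆ K := by
      rintro _ ⟨z, hz, rfl⟩; exact hKscale c hc.le z (interior_subset hz)
    exact interior_maximal h2 h1 ⟨y, hy, rfl⟩
  -- x is an interior point
  have hxint : x ∈ interior K := by
    have h1 : r • x ∈ interior K := hLx ▸ hLsp x hxK hx0
    have h2 := hintK r⁻¹ (by positivity) _ h1
    rwa [inv_smul_smul₀ hr.ne'] at h2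
  -- generic neighborhood lemma
  have nhd : ∀ (v : X) (t : ℝ), x - t • v ∈ interior K → ∃ δ > 0, x - (t + δ) • v ∈ K := by
    intro v t ht
    have hf : Continuous fun s : ℝ => x - s • v :=
      continuous_const.sub (continuous_id.smul continuous_const)
    have hmem : (fun s : ℝ => x - s • v) ⁻¹' interior K ∈ nhds t :=
      (isOpen_interior.preimage hf).mem_nhds ht
    rcases Metric.mem_nhds_iff.1 hmem with ⟨δ, hδ, hball⟩
    refine ⟨δ / 2, by linarith, interior_subset (hball ?_)⟩
    simp only [Metric.mem_ball, Real.dist_eq]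
    rw [add_sub_cancel_left, abs_of_pos (by linarith)]
    linarith
  -- the sets S v
  set S : X → Set ℝ := fun v => {t : ℝ | 0 ≤ t ∧ x - t • v ∈ K} with hS
  have hSclosed : ∀ v, IsClosed (S v) := by
    intro v
    have hf : Continuous fun s : ℝ => x - s • v :=
      continuous_const.sub (continuous_id.smul continuous_const)
    exact (isClosed_Ici.inter (hKclosed.preimage hf))
  have hSne : ∀ v, (0 : ℝ) ∈ S v := by
    intro v; exact ⟨le_rfl, by simpa using hxK⟩
  have hbdd : ∀ v : X, -v ∉ K → BddAbove (S v) := by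
    intro v hv
    by_contra hb
    apply hv
    have h : ∀ n : ℕ, ∃ t : ℝ, t ∈ S v ∧ ((n : ℝ) + 1) ≤ t := by
      intro n
      rcases not_bddAbove_iff.1 hb ((n : ℝ) + 1) with ⟨t, ht, htn⟩
      exact ⟨t, ht, htn.le⟩
    choose t ht htn using h
    have hmem : ∀ n, (t n)⁻¹ • x - v ∈ K := by
      intro n
      have hpos : (0 : ℝ) < t n := lt_of_lt_of_le (by positivity) (htn n)
      have := hKscale (t n)⁻¹ (by positivity) _ (ht n).2
      rwa [smul_sub, smul_smul, inv_mul_cancel₀ hpos.ne', one_smul] at this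
    have h1 : Filter.Tendsto t Filter.atTop Filter.atTop := by
      apply Filter.tendsto_atTop_mono htn
      exact Filter.tendsto_atTop_add_const_right _ 1 tendsto_natCast_atTop_atTop
    have h2 : Filter.Tendsto (fun n => (t n)⁻¹) Filter.atTop (nhds 0) :=
      Filter.Tendsto.inv_tendsto_atTop h1
    have h3 := (h2.smul_const x).sub_const v
    rw [zero_smul, zero_sub] at h3
    exact hKclosed.mem_of_tendsto h3 (Filter.Eventually.of_forall hmem)
  -- sup is attained and positive
  have hsup : ∀ v : X, -v ∉ K → sSup (S v) ∈ S v ∧ 0 < sSup (S v) := by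
    intro v hv
    have hb := hbdd v hv
    have hmem : sSup (S v) ∈ S v :=
      (hSclosed v).csSup_mem ⟨0, hSne v⟩ hb
    rcases nhd v 0 (by simpa using hxint) with ⟨δ, hδ, hδK⟩
    have : δ ∈ S v := ⟨hδ.le, by simpa using hδK⟩
    exact ⟨hmem, lt_of_lt_of_le hδ (le_csSup hb this)⟩
  -- applying L to elements of the set and rescaling
  have step : ∀ (v : X) (μ : ℝ), L v = μ • v → ∀ t : ℝ, x - t • v ∈ K →
      x - t • v ≠ 0 → x - (t * μ / r) • v ∈ K := by
    intro v μ hLv t htK htne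
    have h1 : L (x - t • v) ∈ K := interior_subset (hLsp _ htK htne)
    have h2 : L (x - t • v) = r • (x - (t * μ / r) • v) := by
      rw [map_sub, map_smul, hLx, hLv, smul_sub, smul_smul, smul_smul]
      congr 2
      field_simp
    rw [h2] at h1
    have h3 := hKscale r⁻¹ (by positivity) _ h1
    rwa [inv_smul_smul₀ hr.ne'] at h3
  -- x - t • v is never 0 for eigendirections with eigenvalue ≠ r
  have nz : ∀ (v : X) (μ : ℝ), v ≠ 0 → L v = μ • v → μ ≠ r → ∀ t : ℝ, x - t • v ≠ 0 := by
    intro v μ hv hLv hμ t hxeq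
    have hx : x = t • v := by rwa [sub_eq_zero] at hxeq
    have h1 : r • x = μ • x := by
      rw [← hLx, hx, map_smul, hLv, smul_smul, smul_smul, mul_comm]
    have h2 : (r - μ) • x = 0 := by rw [sub_smul, h1, sub_self]
    rcases smul_eq_zero.1 h2 with h | h
    · exact hμ (by linarith [sub_eq_zero.1 h])
    · exact hx0 h
  intro lam w hw hLw hne
  rcases lt_trichotomy lam 0 with hlam | hlam | hlam
  · -- negative eigenvalue
    rw [abs_of_neg hlam]
    -- w ∉ K and -w ∉ K
    have notK : ∀ v : X, v ≠ 0 → L v = lam • v → v ∉ K := by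
      intro v hv hLv hvK
      have h2 : lam • v ∈ K := hLv ▸ interior_subset (hLsp v hvK hv)
      have h3 : (-lam) • v ∈ K := hKscale (-lam) (by linarith) v hvK
      have h4 : -((-lam) • v) ∈ K := by rwa [neg_smul, neg_neg]
      have h5 := hKsalient _ h3 h4
      rcases smul_eq_zero.1 h5 with h | h
      · exact absurd h (by intro hh; nlinarith [neg_eq_zero.1 hh])
      · exact hv h
    have hLnw : L (-w) = lam • (-w) := by rw [map_neg, hLw, smul_neg]
    have hwK : w ∉ K := notK w hw hLw
    have hnwK : -w ∉ K := notK (-w) (neg_ne_zero.2 hw) hLnw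
    obtain ⟨haS, hapos⟩ := hsup w hnwK
    obtain ⟨hbS, hbpos⟩ := hsup (-w) (by rwa [neg_neg])
    set a := sSup (S w) with ha
    set b := sSup (S (-w)) with hb
    -- a * (-lam) / r ∈ S (-w)
    have hmem1 : a * (-lam) / r ∈ S (-w) := by
      have h1 := step w lam hLw a haS.2 (nz w lam hw hLw hne a)
      refine ⟨div_nonneg (mul_nonneg hapos.le (by linarith)) hr.le, ?_⟩
      have heq : (a * (-lam) / r) • (-w) = (a * lam / r) • w := by
        rw [smul_neg, ← neg_smul]; congr 1; ring
      rwa [heq]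
    have hmem2 : b * (-lam) / r ∈ S w := by
      have h1 := step (-w) lam hLnw b hbS.2
        (nz (-w) lam (neg_ne_zero.2 hw) hLnw hne b)
      refine ⟨div_nonneg (mul_nonneg hbpos.le (by linarith)) hr.le, ?_⟩
      have heq : (b * lam / r) • (-w) = (b * (-lam) / r) • w := by
        rw [smul_neg, ← neg_smul]; congr 1; ring
      rwa [heq] at h1
    have hle1 : a * (-lam) / r ≤ b := le_csSup (hbdd (-w) (by rwa [neg_neg])) hmem1
    have hle2 : b * (-lam) / r ≤ a := le_csSup (hbdd w hnwK) hmem2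
    -- conclude -lam ≤ r, then rule out equality
    by_contra hcon
    push_neg at hcon
    have h1' : a * (-lam) ≤ b * r := (div_le_iff₀ hr).1 hle1
    have h2' : b * (-lam) ≤ a * r := (div_le_iff₀ hr).1 hle2
    have h3' : a * r ≤ a * (-lam) := mul_le_mul_of_nonneg_left hcon hapos.le
    have h4' : b * r ≤ b * (-lam) := mul_le_mul_of_nonneg_left hcon hbpos.le
    have hle : -lam = r := by nlinarith
    have hab : a = b := by nlinarith
    -- equality case lam = -r
    have hxa : x - a • w ∈ K := haS.2
    have hxane : x - a • w ≠ 0 := nz w lam hw hLw hne a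
    have h1 : L (x - a • w) ∈ interior K := hLsp _ hxa hxane
    have h2 : L (x - a • w) = r • (x + a • w) := by
      rw [map_sub, map_smul, hLx, hLw, smul_add, smul_smul, smul_smul]
      rw [sub_eq_add_neg, ← neg_smul]
      congr 2
      rw [show lam = -r by linarith]
      ring
    rw [h2] at h1
    have h3 := hintK r⁻¹ (by positivity) _ h1
    rw [inv_smul_smul₀ hr.ne'] at h3
    have h4 : x - a • (-w) ∈ interior K := by rwa [smul_neg, sub_neg_eq_add]
    rcases nhd (-w) a h4 with ⟨δ, hδ, hδK⟩
    have h5 : a + δ ∈ S (-w) := ⟨by linarith, hδK⟩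
    have h6 := le_csSup (hbdd (-w) (by rwa [neg_neg])) h5
    rw [← hb, ← hab] at h6
    linarith
  · simp [hlam]; positivity
  · -- positive eigenvalue
    rw [abs_of_pos hlam]
    by_contra hcon
    push_neg at hcon
    have hgt : r < lam := lt_of_le_of_ne hcon (Ne.symm hne)
    obtain ⟨v, hv0, hLv, hvnK⟩ : ∃ v : X, v ≠ 0 ∧ L v = lam • v ∧ -v ∉ K := by
      by_cases h : -w ∈ K
      · refine ⟨-w, neg_ne_zero.2 hw, by rw [map_neg, hLw, smul_neg], ?_⟩
        rw [neg_neg]; intro hK; exact hw (hKsalient w hK h)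
      · exact ⟨w, hw, hLw, h⟩
    obtain ⟨haS, hapos⟩ := hsup v hvnK
    set a := sSup (S v) with ha
    have hmem : a * lam / r ∈ S v :=
      ⟨by positivity, step v lam hLv a haS.2 (nz v lam hv0 hLv hne a)⟩
    have hle := le_csSup (hbdd v hvnK) hmem
    rw [← ha] at hle
    have h1' : a * lam ≤ a * r := (div_le_iff₀ hr).1 hle
    have h2' : a * r < a * lam := mul_lt_mul_of_pos_left hgt hapos
    linarith
end

section
/- Let X be a real Banach space and K ⊆ X a cone with nonempty interior. Let x be in the interior of K, and let u, v ∈ X be linearly independent vectors such that the linear span of {u, v} meets K only in {0}. Then the set Σ := {(ξ, η) ∈ ℝ² : x + ξ·u + η·v ∈ K} is bounded and closed (hence compact) in ℝ². -/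
/-- Let `X` be a real Banach space and `K ⊆ X` a cone with nonempty
interior.  Let `x ∈ interior K`, and let `u, v` be linearly independent vectors whose span
meets `K` only in `{0}`.  Then `Σ = {(ξ, η) : x + ξ • u + η • v ∈ K}` is bounded and closed
in `ℝ²`. -/
theorem sigma_set_bounded_closed
    {X : Type*} [NormedAddCommGroup X] [NormedSpace ℝ X] [CompleteSpace X]
    (K : Set X)
    (hKne : K.Nonempty)
    (hKclosed : IsClosed K)
    (hKconv : Convex ℝ K)
    (hKscale : ∀ t : ℝ, 0 ≤ t → ∀ y ∈ K, t • y ∈ K)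
    (hKsalient : ∀ y ∈ K, -y ∈ K → y = 0)
    (hKint : (interior K).Nonempty)
    (x : X) (hx : x ∈ interior K)
    (u v : X) (huv : LinearIndependent ℝ ![u, v])
    (hspan : ∀ z ∈ Submodule.span ℝ ({u, v} : Set X), z ∈ K → z = 0) :
    Bornology.IsBounded {p : ℝ × ℝ | x + p.1 • u + p.2 • v ∈ K} ∧
      IsClosed {p : ℝ × ℝ | x + p.1 • u + p.2 • v ∈ K} := by
  have hclosed : IsClosed {p : ℝ × ℝ | x + p.1 • u + p.2 • v ∈ K} := by
    have hcont : Continuous fun p : ℝ × ℝ => x + p.1 • u + p.2 • v := by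
      fun_prop
    exact hKclosed.preimage hcont
  refine ⟨?_, hclosed⟩
  by_contra hb
  rw [isBounded_iff_forall_norm_le] at hb
  push_neg at hb
  choose p hpS hpn using fun n : ℕ => hb ((n : ℝ) + 1)
  have hppos : ∀ n, (0 : ℝ) < ‖p n‖ := fun n =>
    lt_trans (by positivity) (hpn n)
  set q : ℕ → ℝ × ℝ := fun n => ‖p n‖⁻¹ • p n with hq_def
  have hqsphere : ∀ n, q n ∈ Metric.sphere (0 : ℝ × ℝ) 1 := by
    intro n
    rw [mem_sphere_zero_iff_norm, hq_def, norm_smul, norm_inv, norm_norm]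
    exact inv_mul_cancel₀ (hppos n).ne'
  obtain ⟨l, hl, φ, hφmono, hφtendsto⟩ :=
    (isCompact_sphere (0 : ℝ × ℝ) 1).tendsto_subseq hqsphere
  -- the scaled points lie in K
  have hmem : ∀ n, (‖p (φ n)‖⁻¹) • x + (q (φ n)).1 • u + (q (φ n)).2 • v ∈ K := by
    intro n
    have h1 := hKscale (‖p (φ n)‖⁻¹) (by positivity) _ (hpS (φ n))
    have : (‖p (φ n)‖⁻¹) • (x + (p (φ n)).1 • u + (p (φ n)).2 • v)
        = (‖p (φ n)‖⁻¹) • x + (q (φ n)).1 • u + (q (φ n)).2 • v := by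
      simp [hq_def, smul_add, smul_smul, Prod.smul_fst, Prod.smul_snd, smul_eq_mul]
    rwa [this] at h1
  -- inverse norms tend to zero
  have h0 : Filter.Tendsto (fun n => ‖p (φ n)‖⁻¹) Filter.atTop (nhds 0) := by
    apply squeeze_zero (fun n => by positivity) (g := fun n : ℕ => 1 / ((n : ℝ) + 1))
    · intro n
      rw [one_div]
      apply inv_anti₀ (by positivity)
      calc (n : ℝ) + 1 ≤ (φ n : ℝ) + 1 := by
            have : n ≤ φ n := hφmono.le_apply
            have := (Nat.cast_le (α := ℝ)).2 this; linarith
        _ ≤ ‖p (φ n)‖ := (hpn (φ n)).le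
    · exact tendsto_one_div_add_atTop_nhds_zero_nat
  have hq1 : Filter.Tendsto (fun n => (q (φ n)).1) Filter.atTop (nhds l.1) :=
    (continuous_fst.tendsto l).comp hφtendsto
  have hq2 : Filter.Tendsto (fun n => (q (φ n)).2) Filter.atTop (nhds l.2) :=
    (continuous_snd.tendsto l).comp hφtendsto
  have hlim : Filter.Tendsto
      (fun n => (‖p (φ n)‖⁻¹) • x + (q (φ n)).1 • u + (q (φ n)).2 • v)
      Filter.atTop (nhds ((0 : ℝ) • x + l.1 • u + l.2 • v)) :=
    ((h0.smul_const x).add (hq1.smul_const u)).add (hq2.smul_const v)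
  have hKmem : l.1 • u + l.2 • v ∈ K := by
    have := hKclosed.mem_of_tendsto hlim (Filter.Eventually.of_forall hmem)
    simpa using this
  have hspan_mem : l.1 • u + l.2 • v ∈ Submodule.span ℝ ({u, v} : Set X) :=
    Submodule.add_mem _
      (Submodule.smul_mem _ _ (Submodule.subset_span (by simp)))
      (Submodule.smul_mem _ _ (Submodule.subset_span (by simp)))
  have hzero := hspan _ hspan_mem hKmem
  obtain ⟨h1, h2⟩ := LinearIndependent.pair_iff.1 huv l.1 l.2 hzero
  have : l = 0 := Prod.ext h1 h2
  rw [mem_sphere_zero_iff_norm] at hl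
  simp [this] at hl
end

section
/- Let X be a real Banach space and K ⊆ X a cone with nonempty interior. Let x be in the interior of K, and let u, v ∈ X be linearly independent vectors such that the linear span of {u, v} meets K only in {0}. For θ ∈ ℝ set w(θ) = cos(θ)·u + sin(θ)·v and R₀(θ) = sup{R ≥ 0 : x + R·w(θ) ∈ K}. Then R₀(θ) is finite and strictly positive for every θ, the function θ ↦ R₀(θ) is continuous on ℝ and periodic with period 2π, and hence R₀ is bounded on ℝ. -/
open Topology Filter Set


/-- The direction vector `w(θ) = cos θ • u + sin θ • v`. -/
noncomputable def wVec {X : Type*} [NormedAddCommGroup X] [NormedSpace ℝ X]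
    (u v : X) (θ : ℝ) : X :=
  Real.cos θ • u + Real.sin θ • v

/-- `R₀(θ) = sup {R ≥ 0 : x + R • w(θ) ∈ K}`. -/
noncomputable def R0 {X : Type*} [NormedAddCommGroup X] [NormedSpace ℝ X]
    (K : Set X) (x u v : X) (θ : ℝ) : ℝ :=
  sSup {R : ℝ | 0 ≤ R ∧ x + R • wVec u v θ ∈ K}

/-- Let `X` be a real Banach space and `K ⊆ X` a cone with nonempty
interior.  Let `x ∈ interior K`, and let `u, v` be linearly independent vectors whose span
meets `K` only in `{0}`.  For `θ ∈ ℝ` set `w(θ) = cos θ • u + sin θ • v` and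
`R₀(θ) = sup {R ≥ 0 : x + R • w(θ) ∈ K}`.  Then `R₀(θ)` is finite (the defining set is
bounded above) and strictly positive for every `θ`, `R₀` is continuous and `2π`-periodic,
and hence bounded on `ℝ`. -/
theorem R0_finite_positive_continuous_periodic_bounded
    {X : Type*} [NormedAddCommGroup X] [NormedSpace ℝ X] [CompleteSpace X]
    (K : Set X)
    (hKne : K.Nonempty)
    (hKclosed : IsClosed K)
    (hKconv : Convex ℝ K)
    (hKscale : ∀ t : ℝ, 0 ≤ t → ∀ y ∈ K, t • y ∈ K)
    (hKsalient : ∀ y ∈ K, -y ∈ K → y = 0)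
    (hKint : (interior K).Nonempty)
    (x : X) (hx : x ∈ interior K)
    (u v : X) (huv : LinearIndependent ℝ ![u, v])
    (hspan : ∀ z ∈ Submodule.span ℝ ({u, v} : Set X), z ∈ K → z = 0) :
    (∀ θ : ℝ, BddAbove {R : ℝ | 0 ≤ R ∧ x + R • wVec u v θ ∈ K} ∧ 0 < R0 K x u v θ) ∧
      Continuous (R0 K x u v) ∧
      (∀ θ : ℝ, R0 K x u v (θ + 2 * Real.pi) = R0 K x u v θ) ∧
      (∃ M : ℝ, ∀ θ : ℝ, R0 K x u v θ ≤ M) := by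
  classical
  set C : Set X := (fun y => x + y) ⁻¹' K with hCdef
  have hCconv : Convex ℝ C := by
    intro a ha b hb s t hs ht hst
    simp only [hCdef, Set.mem_preimage] at *
    have h2 : x + s • a + t • b = s • (x + a) + t • (x + b) := by
      match_scalars <;> linarith
    rw [show x + (s • a + t • b) = x + s • a + t • b by abel, h2]
    exact hKconv ha hb hs ht hst
  have hCclosed : IsClosed C := hKclosed.preimage (continuous_const.add continuous_id)
  have hC0 : C ∈ 𝓝 (0 : X) := by
    refine Filter.mem_of_superset
      ((isOpen_interior.preimage (continuous_const.add continuous_id)).mem_nhds ?_)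
      (Set.preimage_mono interior_subset)
    simpa using hx
  have mem_iff : ∀ y : X, y ∈ C ↔ gauge C y ≤ 1 := by
    intro y
    rw [gauge_le_one_iff_mem_closure hCconv hC0, hCclosed.closure_eq]
  have hw0 : ∀ θ : ℝ, wVec u v θ ≠ 0 := by
    intro θ h
    obtain ⟨h1, h2⟩ := LinearIndependent.pair_iff.mp huv (Real.cos θ) (Real.sin θ) h
    have := Real.sin_sq_add_cos_sq θ
    rw [h1, h2] at this
    norm_num at this
  have hwspan : ∀ θ : ℝ, wVec u v θ ∈ Submodule.span ℝ ({u, v} : Set X) := by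
    intro θ
    exact Submodule.mem_span_pair.mpr ⟨Real.cos θ, Real.sin θ, rfl⟩
  have hgpos : ∀ θ : ℝ, 0 < gauge C (wVec u v θ) := by
    intro θ
    rcases (gauge_nonneg (wVec u v θ)).lt_or_eq with h | h
    · exact h
    have hmemK : ∀ t : ℝ, 0 ≤ t → x + t • wVec u v θ ∈ K := by
      intro t ht
      have : gauge C (t • wVec u v θ) ≤ 1 := by
        rw [gauge_smul_of_nonneg ht, ← h, smul_zero]
        norm_num
      exact (mem_iff _).mpr this
    have hlim : Filter.Tendsto (fun n : ℕ => (1 / ((n : ℝ) + 1)) • x + wVec u v θ)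
        Filter.atTop (𝓝 (wVec u v θ)) := by
      have h1 : Filter.Tendsto (fun n : ℕ => (1 / ((n : ℝ) + 1)) • x)
          Filter.atTop (𝓝 ((0 : ℝ) • x)) :=
        (tendsto_one_div_add_atTop_nhds_zero_nat).smul_const x
      rw [zero_smul] at h1
      simpa using h1.add tendsto_const_nhds
    have hmem : ∀ n : ℕ, (1 / ((n : ℝ) + 1)) • x + wVec u v θ ∈ K := by
      intro n
      have hn : (0 : ℝ) < (n : ℝ) + 1 := by positivity
      have := hKscale (1 / ((n : ℝ) + 1)) (by positivity)
        (x + ((n : ℝ) + 1) • wVec u v θ) (hmemK _ (by positivity))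
      rw [one_div]
      rwa [smul_add, smul_smul, one_div, inv_mul_cancel₀ hn.ne', one_smul] at this
    have hwK : wVec u v θ ∈ K := hKclosed.mem_of_tendsto hlim
      (Filter.Eventually.of_forall hmem)
    exact absurd (hspan _ (hwspan θ) hwK) (hw0 θ)
  have hmemR : ∀ (θ : ℝ) (R : ℝ), 0 ≤ R →
      (x + R • wVec u v θ ∈ K ↔ R ≤ 1 / gauge C (wVec u v θ)) := by
    intro θ R hR
    have hg := hgpos θ
    have : x + R • wVec u v θ ∈ K ↔ R • wVec u v θ ∈ C := Iff.rfl
    rw [this, mem_iff, gauge_smul_of_nonneg hR, smul_eq_mul, le_div_iff₀ hg]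
  have hSet : ∀ θ : ℝ, {R : ℝ | 0 ≤ R ∧ x + R • wVec u v θ ∈ K} =
      Set.Icc 0 (1 / gauge C (wVec u v θ)) := by
    intro θ
    ext R
    simp only [Set.mem_setOf_eq, Set.mem_Icc]
    exact and_congr_right fun hR => hmemR θ R hR
  have hR0eq : ∀ θ : ℝ, R0 K x u v θ = 1 / gauge C (wVec u v θ) := by
    intro θ
    rw [R0, hSet θ, csSup_Icc (one_div_nonneg.mpr (hgpos θ).le)]
  have hwcont : Continuous (wVec u v) :=
    (Real.continuous_cos.smul continuous_const).add
      (Real.continuous_sin.smul continuous_const)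
  have hcont : Continuous (R0 K x u v) := by
    have : Continuous fun θ => 1 / gauge C (wVec u v θ) :=
      continuous_const.div ((continuous_gauge hCconv hC0).comp hwcont)
        fun θ => (hgpos θ).ne'
    convert this using 1
    exact funext hR0eq
  have hper : Function.Periodic (R0 K x u v) (2 * Real.pi) := by
    intro θ
    rw [hR0eq, hR0eq]
    have : wVec u v (θ + 2 * Real.pi) = wVec u v θ := by
      simp [wVec, Real.cos_add_two_pi, Real.sin_add_two_pi]
    rw [this]
  refine ⟨fun θ => ⟨?_, ?_⟩, hcont, hper, ?_⟩
  · rw [hSet θ]; exact bddAbove_Icc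
  · rw [hR0eq θ]
    have := hgpos θ
    positivity
  · obtain ⟨θ₀, _, hmax⟩ := (isCompact_Icc (a := (0:ℝ)) (b := 2 * Real.pi)).exists_isMaxOn
      ⟨0, le_refl 0, by positivity⟩ hcont.continuousOn
    refine ⟨R0 K x u v θ₀, fun θ => ?_⟩
    obtain ⟨y, hy, hyeq⟩ := hper.exists_mem_Ico₀ (by positivity) θ
    rw [hyeq]
    exact hmax ⟨hy.1, hy.2.le⟩
end

section
/- Let X be a real Banach space, K ⊆ X a cone with nonempty interior, and L : X → X a strongly positive bounded linear operator. Let y ∈ K \ {0} and let λ be a real number with λ > r(L), where r(L) = lim_{n→∞} ‖Lⁿ‖^{1/n}. Then the equation λ·z − L z = y has a unique solution z ∈ X, and this solution lies in the interior of K. -/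
/-!
Pick `r < ρ < λ`. Gelfand's formula gives `‖Lⁿ‖ ≤ ρⁿ` eventually, so the Neumann series
`S = ∑ (λ⁻¹ L)ⁿ` converges and inverts `1 - λ⁻¹ L`; hence the unique solution is `z = S (λ⁻¹ y)`.
Every term of this series maps the closed cone `K` into itself, so `z ∈ K`, and `z ≠ 0` because
`y ≠ 0`. Strong positivity then gives `L z ∈ int K`, so `z = λ⁻¹ (y + L z) ∈ int K`.
-/

open Filter Topology Pointwise

theorem nonneg_of_tendsto_norm_pow_rpow_inv {A : Type*} [NormedRing A] {a : A} {r : ℝ}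
    (hr : Tendsto (fun n : ℕ => ‖a ^ n‖ ^ (n : ℝ)⁻¹) atTop (𝓝 r)) : 0 ≤ r :=
  ge_of_tendsto' hr fun _ => Real.rpow_nonneg (norm_nonneg _) _

theorem eventually_le_pow_of_tendsto_rpow_inv {a : ℕ → ℝ} (ha : ∀ n, 0 ≤ a n) {r ρ : ℝ}
    (h : Tendsto (fun n : ℕ => a n ^ (n : ℝ)⁻¹) atTop (𝓝 r)) (hρ : r < ρ) :
    ∀ᶠ n in atTop, a n ≤ ρ ^ n := by
  filter_upwards [h.eventually (eventually_lt_nhds hρ), eventually_gt_atTop 0] with n hn hn0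
  have hn0' : (0 : ℝ) < n := by exact_mod_cast hn0
  calc a n = (a n ^ (n : ℝ)⁻¹) ^ n := by
        rw [← Real.rpow_natCast, ← Real.rpow_mul (ha n), inv_mul_cancel₀ hn0'.ne',
          Real.rpow_one]
    _ ≤ ρ ^ n := by gcongr; exact Real.rpow_nonneg (ha n) _

theorem summable_pow_inv_smul_of_tendsto_norm_pow_rpow_inv {A : Type*} [NormedRing A]
    [NormedAlgebra ℝ A] [CompleteSpace A] {a : A} {r lam : ℝ}
    (hr : Tendsto (fun n : ℕ => ‖a ^ n‖ ^ (n : ℝ)⁻¹) atTop (𝓝 r)) (hlam : r < lam) :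
    Summable fun n : ℕ => (lam⁻¹ • a) ^ n := by
  have hr0 := nonneg_of_tendsto_norm_pow_rpow_inv hr
  have hlam0 : 0 < lam := hr0.trans_lt hlam
  obtain ⟨ρ, hrρ, hρlam⟩ := exists_between hlam
  refine (summable_geometric_of_lt_one (div_nonneg (hr0.trans hrρ.le) hlam0.le)
    ((div_lt_one hlam0).2 hρlam)).of_norm_bounded_eventually_nat ?_
  filter_upwards [eventually_le_pow_of_tendsto_rpow_inv (fun n => norm_nonneg _) hr hrρ]
    with n hn
  calc ‖(lam⁻¹ • a) ^ n‖ = lam⁻¹ ^ n * ‖a ^ n‖ := by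
        rw [smul_pow, norm_smul, norm_pow, Real.norm_of_nonneg (by positivity)]
    _ ≤ lam⁻¹ ^ n * ρ ^ n := by gcongr
    _ = (ρ / lam) ^ n := by rw [← mul_pow, inv_mul_eq_div]

theorem Convex.smul_add_smul_mem_of_smul_mem {𝕜 E : Type*} [Field 𝕜] [LinearOrder 𝕜]
    [IsStrictOrderedRing 𝕜] [AddCommGroup E] [Module 𝕜 E] {K : Set E} (hK : Convex 𝕜 K)
    (hKscale : ∀ t : 𝕜, 0 ≤ t → ∀ y ∈ K, t • y ∈ K) :
    ∀ x ∈ K, ∀ y ∈ K, ∀ a : 𝕜, 0 ≤ a → ∀ b : 𝕜, 0 ≤ b → a • x + b • y ∈ K := by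
  intro x hx y hy a ha b hb
  have hmid : (2⁻¹ : 𝕜) • (a • x) + (2⁻¹ : 𝕜) • (b • y) ∈ K :=
    hK (hKscale a ha x hx) (hKscale b hb y hy) (by positivity) (by positivity) (by norm_num)
  convert hKscale 2 zero_le_two _ hmid using 1
  rw [smul_add, smul_inv_smul₀ two_ne_zero, smul_inv_smul₀ two_ne_zero]

namespace PointedCone

variable {𝕜 E : Type*} [Field 𝕜] [LinearOrder 𝕜] [IsStrictOrderedRing 𝕜] [AddCommGroup E]
  [Module 𝕜 E] [TopologicalSpace E] (C : PointedCone 𝕜 E)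

theorem add_mem_interior [IsTopologicalAddGroup E] {x v : E} (hx : x ∈ C)
    (hv : v ∈ interior (C : Set E)) : x + v ∈ interior (C : Set E) :=
  interior_mono (Set.add_subset_iff.2 fun _ ha _ hb => C.add_mem ha hb)
    (subset_interior_add_right (Set.add_mem_add hx hv))

theorem smul_mem_interior [ContinuousConstSMul 𝕜 E] {c : 𝕜} (hc : 0 < c) {v : E}
    (hv : v ∈ interior (C : Set E)) : c • v ∈ interior (C : Set E) := by
  have : c • v ∈ interior (c • (C : Set E)) := by
    rw [interior_smul₀ hc.ne']
    exact Set.smul_mem_smul_set hv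
  exact interior_mono (Set.smul_set_subset_iff.2 fun _ hx => C.smul_mem hc.le hx) this

end PointedCone

namespace ContinuousLinearMap

section Neumann

variable {𝕜 X : Type*} [NontriviallyNormedField 𝕜] [NormedAddCommGroup X] [NormedSpace 𝕜 X]

theorem sub_apply_eq_iff_of_summable_pow {T : X →L[𝕜] X} (hT : Summable (T ^ ·)) (y z : X) :
    z - T z = y ↔ z = (∑' n, T ^ n) y := by
  constructor
  · rintro rfl
    simpa using (DFunLike.congr_fun hT.tsum_pow_mul_one_sub z).symm
  · rintro rfl
    simpa using DFunLike.congr_fun hT.one_sub_mul_tsum_pow y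

theorem smul_sub_apply_eq_iff_of_summable_pow {L : X →L[𝕜] X} {lam : 𝕜} (hlam : lam ≠ 0)
    (hL : Summable fun n : ℕ => (lam⁻¹ • L) ^ n) (y z : X) :
    lam • z - L z = y ↔ z = (∑' n, (lam⁻¹ • L) ^ n) (lam⁻¹ • y) := by
  rw [← sub_apply_eq_iff_of_summable_pow hL, smul_apply, eq_inv_smul_iff₀ hlam, smul_sub,
    smul_inv_smul₀ hlam]

theorem tsum_pow_apply_mem {S : Type*} [SetLike S X] [AddSubmonoidClass S X] {C : S}
    (hC : IsClosed (C : Set X)) {T : X →L[𝕜] X} (hTC : Set.MapsTo T C C)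
    (hT : Summable (T ^ ·)) {y : X} (hy : y ∈ C) :
    (∑' n, T ^ n) y ∈ C := by
  change apply 𝕜 X y (∑' n, T ^ n) ∈ C
  rw [(apply 𝕜 X y).map_tsum hT]
  exact tsum_mem hC fun n => by
    simpa [FunLike.coe_pow_eq_iterate] using hTC.iterate n hy

end Neumann

section StronglyPositive

variable {𝕜 E : Type*} [Field 𝕜] [LinearOrder 𝕜] [IsStrictOrderedRing 𝕜] [AddCommGroup E]
  [Module 𝕜 E] [TopologicalSpace E]

def IsStronglyPositive (C : PointedCone 𝕜 E) (L : E →L[𝕜] E) : Prop :=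
  ∀ x ∈ C, x ≠ 0 → L x ∈ interior (C : Set E)

namespace IsStronglyPositive

variable {C : PointedCone 𝕜 E} {L : E →L[𝕜] E}

theorem mapsTo (hL : IsStronglyPositive C L) : Set.MapsTo L C C := fun x hx => by
  rcases eq_or_ne x 0 with rfl | hx0
  · simp
  · exact interior_subset (hL x hx hx0)

theorem smul [ContinuousConstSMul 𝕜 E] (hL : IsStronglyPositive C L) {c : 𝕜} (hc : 0 < c) :
    IsStronglyPositive C (c • L) := fun x hx hx0 =>
  C.smul_mem_interior hc (hL x hx hx0)

theorem mem_interior_of_smul_sub_apply_eq [IsTopologicalAddGroup E] [ContinuousConstSMul 𝕜 E]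
    (hL : IsStronglyPositive C L) {lam : 𝕜} (hlam : 0 < lam) {y z : E} (hy : y ∈ C)
    (hy0 : y ≠ 0) (hz : z ∈ C) (hzy : lam • z - L z = y) : z ∈ interior (C : Set E) := by
  have hz0 : z ≠ 0 := by
    rintro rfl
    exact hy0 (by simpa using hzy.symm)
  have hz_eq : z = lam⁻¹ • (y + L z) := by
    rw [← hzy, sub_add_cancel, inv_smul_smul₀ hlam.ne']
  rw [hz_eq]
  exact C.smul_mem_interior (inv_pos.2 hlam) (C.add_mem_interior hy (hL z hz hz0))

end IsStronglyPositive

end StronglyPositive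

end ContinuousLinearMap

open ContinuousLinearMap in
theorem resolvent_equation_above_spectral_radius_general
    {X : Type*} [NormedAddCommGroup X] [NormedSpace ℝ X] [CompleteSpace X]
    (K : Set X)
    (hKclosed : IsClosed K)
    (hKconv : Convex ℝ K)
    (hKscale : ∀ t : ℝ, 0 ≤ t → ∀ y ∈ K, t • y ∈ K)
    (L : X →L[ℝ] X)
    (hLsp : ∀ y ∈ K, y ≠ 0 → L y ∈ interior K)
    (r : ℝ)
    (hr : Filter.Tendsto (fun n : ℕ => ‖L ^ n‖ ^ ((n : ℝ)⁻¹)) Filter.atTop (nhds r))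
    (y : X) (hyK : y ∈ K) (hy0 : y ≠ 0)
    (lam : ℝ) (hlam : r < lam) :
    (∃! z : X, lam • z - L z = y) ∧ (∀ z : X, lam • z - L z = y → z ∈ interior K) := by
  have hlam0 : 0 < lam := (nonneg_of_tendsto_norm_pow_rpow_inv hr).trans_lt hlam
  have hsum := summable_pow_inv_smul_of_tendsto_norm_pow_rpow_inv hr hlam
  have hsol := smul_sub_apply_eq_iff_of_summable_pow hlam0.ne' hsum y
  -- `K` bundled as a pointed cone; `(C : Set X)` is `K` by definition.
  let C : PointedCone ℝ X :=
    .ofConeComb K ⟨y, hyK⟩ (hKconv.smul_add_smul_mem_of_smul_mem hKscale)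
  have hLC : IsStronglyPositive C L := hLsp
  refine ⟨⟨_, (hsol _).2 rfl, fun z hz => (hsol z).1 hz⟩, fun z hz => ?_⟩
  have hzC : z ∈ C := (hsol z).1 hz ▸
    tsum_pow_apply_mem hKclosed (hLC.smul (inv_pos.2 hlam0)).mapsTo hsum
      (C.smul_mem (inv_nonneg.2 hlam0.le) hyK)
  exact hLC.mem_interior_of_smul_sub_apply_eq hlam0 hyK hy0 hzC hz

/-- Let `X` be a real Banach space, `K ⊆ X` a cone with nonempty
interior, and `L : X →L[ℝ] X` strongly positive.  Let `y ∈ K \ {0}` and let `λ > r(L)`,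
where `r(L) = lim ‖Lⁿ‖^{1/n}` (Gelfand's formula).  Then `λ • z - L z = y` has a unique
solution `z ∈ X`, and this solution lies in the interior of `K`. -/
theorem resolvent_equation_above_spectral_radius
    {X : Type*} [NormedAddCommGroup X] [NormedSpace ℝ X] [CompleteSpace X]
    (K : Set X)
    (hKne : K.Nonempty)
    (hKclosed : IsClosed K)
    (hKconv : Convex ℝ K)
    (hKscale : ∀ t : ℝ, 0 ≤ t → ∀ y ∈ K, t • y ∈ K)
    (hKsalient : ∀ y ∈ K, -y ∈ K → y = 0)
    (hKint : (interior K).Nonempty)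
    (L : X →L[ℝ] X)
    (hLsp : ∀ y ∈ K, y ≠ 0 → L y ∈ interior K)
    (r : ℝ)
    (hr : Filter.Tendsto (fun n : ℕ => ‖L ^ n‖ ^ ((n : ℝ)⁻¹)) Filter.atTop (nhds r))
    (y : X) (hyK : y ∈ K) (hy0 : y ≠ 0)
    (lam : ℝ) (hlam : r < lam) :
    (∃! z : X, lam • z - L z = y) ∧ (∀ z : X, lam • z - L z = y → z ∈ interior K) :=
  resolvent_equation_above_spectral_radius_general K hKclosed hKconv hKscale L hLsp r hr y hyK hy0
    lam hlam
end

section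
/- Let X be a real Banach space, K ⊆ X a cone with nonempty interior, and L : X → X a strongly positive bounded linear operator. Suppose r ∈ ℝ is an eigenvalue of L with an eigenvector x in the interior of K (L x = r x). Let y ∈ K \ {0} and let λ be a real number with λ ≤ r. Then the equation λ·z − L z = y has no solution z ∈ K. -/
/-- Let `X` be a real Banach space, `K ⊆ X` a cone with nonempty
interior, and `L : X →L[ℝ] X` strongly positive.  Suppose `r` is an eigenvalue of `L` with
an eigenvector `x ∈ interior K`.  Let `y ∈ K \ {0}` and `λ ≤ r`.  Then the equation
`λ • z - L z = y` has no solution `z ∈ K`. -/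
theorem resolvent_equation_no_cone_solution_below
    {X : Type*} [NormedAddCommGroup X] [NormedSpace ℝ X] [CompleteSpace X]
    (K : Set X)
    (hKne : K.Nonempty)
    (hKclosed : IsClosed K)
    (hKconv : Convex ℝ K)
    (hKscale : ∀ t : ℝ, 0 ≤ t → ∀ y ∈ K, t • y ∈ K)
    (hKsalient : ∀ y ∈ K, -y ∈ K → y = 0)
    (hKint : (interior K).Nonempty)
    (L : X →L[ℝ] X)
    (hLsp : ∀ y ∈ K, y ≠ 0 → L y ∈ interior K)
    (r : ℝ) (x : X) (hx : x ∈ interior K) (hx0 : x ≠ 0) (hLx : L x = r • x)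
    (y : X) (hyK : y ∈ K) (hy0 : y ≠ 0)
    (lam : ℝ) (hlam : lam ≤ r) :
    ¬ ∃ z ∈ K, lam • z - L z = y := by
  rintro ⟨z, hzK, hz⟩
  have hxK : x ∈ K := interior_subset hx
  have hxnorm : (0:ℝ) < ‖x‖ := norm_pos_iff.2 hx0
  -- K is closed under addition
  have hadd : ∀ a ∈ K, ∀ b ∈ K, a + b ∈ K := by
    intro a ha b hb
    have h := hKconv ha hb (by norm_num : (0:ℝ) ≤ 1/2) (by norm_num : (0:ℝ) ≤ 1/2)
      (by norm_num)
    have h2 := hKscale 2 (by norm_num) _ h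
    have : (2:ℝ) • ((1/2 : ℝ) • a + (1/2 : ℝ) • b) = a + b := by
      module
    rwa [this] at h2
  -- interior K + K ⊆ interior K
  have hintadd : ∀ u ∈ interior K, ∀ v ∈ K, u + v ∈ interior K := by
    intro u hu v hv
    have hsub : (fun w => w + v) '' interior K ⊆ K := by
      rintro _ ⟨w, hw, rfl⟩
      exact hadd w (interior_subset hw) v hv
    have hopen : IsOpen ((fun w => w + v) '' interior K) :=
      (isOpenMap_add_right v) _ isOpen_interior
    exact interior_maximal hsub hopen ⟨u, hu, rfl⟩
  -- from a point of the interior we may subtract a small multiple of x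
  have hsubx : ∀ u ∈ interior K, ∃ δ : ℝ, 0 < δ ∧ u - δ • x ∈ K := by
    intro u hu
    rcases Metric.isOpen_iff.1 isOpen_interior u hu with ⟨ε, hε, hball⟩
    refine ⟨ε / (2 * ‖x‖), by positivity, ?_⟩
    apply interior_subset (hball ?_)
    rw [Metric.mem_ball, dist_eq_norm]
    have h1 : u - (ε / (2 * ‖x‖)) • x - u = -((ε / (2 * ‖x‖)) • x) := by abel
    rw [h1, norm_neg, norm_smul, Real.norm_eq_abs,
      abs_of_pos (by positivity : (0:ℝ) < ε / (2 * ‖x‖))]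
    have heq : ε / (2 * ‖x‖) * ‖x‖ = ε / 2 := by
      field_simp
    rw [heq]; linarith
  -- z ≠ 0
  have hz0 : z ≠ 0 := by
    rintro rfl
    apply hy0
    rw [← hz]; simp
  -- lam • z ∈ interior K
  have hlz : lam • z ∈ interior K := by
    have : lam • z = L z + y := by rw [← hz]; abel
    rw [this]
    exact hintadd _ (hLsp z hzK hz0) _ hyK
  -- lam > 0
  have hlampos : 0 < lam := by
    by_contra h
    push_neg at h
    have hneg : -(lam • z) ∈ K := by
      have := hKscale (-lam) (by linarith) z hzK
      rwa [neg_smul] at this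
    have := hKsalient _ (interior_subset hlz) hneg
    rw [this] at hlz
    -- 0 ∈ interior K is impossible
    rcases hsubx 0 hlz with ⟨δ, hδ, hmem⟩
    rw [zero_sub] at hmem
    have hx' : δ • x = 0 := hKsalient _ (hKscale δ hδ.le x hxK) hmem
    rcases smul_eq_zero.1 hx' with h | h
    · exact hδ.ne' h
    · exact hx0 h
  -- the set of admissible t
  set S : Set ℝ := {t : ℝ | 0 ≤ t ∧ z - t • x ∈ K} with hS
  -- S is nonempty with a positive element
  obtain ⟨δ₀, hδ₀, hmem₀⟩ := hsubx _ hlz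
  have ht₀ : δ₀ / lam ∈ S := by
    constructor
    · positivity
    · have := hKscale lam⁻¹ (by positivity) _ hmem₀
      have heq : lam⁻¹ • (lam • z - δ₀ • x) = z - (δ₀ / lam) • x := by
        rw [smul_sub, smul_smul, smul_smul, inv_mul_cancel₀ hlampos.ne', one_smul,
          div_eq_mul_inv, mul_comm]
      rwa [heq] at this
  -- S is bounded above
  obtain ⟨ε, hε, hball⟩ := Metric.isOpen_iff.1 isOpen_interior x hx
  have hbdd : ∀ t ∈ S, t ≤ 2 * ‖z‖ / ε := by
    intro t ⟨ht0, htK⟩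
    by_contra h
    push_neg at h
    have htpos : 0 < t := lt_of_le_of_lt (by positivity) h
    have hzlt : ‖z‖ / t < ε / 2 := by
      rw [div_lt_div_iff₀ htpos (by norm_num : (0:ℝ) < 2)]
      rw [div_lt_iff₀ hε] at h
      linarith
    -- x - t⁻¹ • z ∈ K (it is in the ball around x)
    have h1 : x - t⁻¹ • z ∈ K := by
      apply interior_subset (hball ?_)
      rw [Metric.mem_ball, dist_eq_norm]
      have : x - t⁻¹ • z - x = -(t⁻¹ • z) := by abel
      rw [this, norm_neg, norm_smul, Real.norm_eq_abs, abs_of_pos (by positivity)]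
      rw [inv_mul_eq_div]
      linarith
    -- t⁻¹ • z - x ∈ K
    have h2 : -(x - t⁻¹ • z) ∈ K := by
      have := hKscale t⁻¹ (by positivity) _ htK
      have heq : t⁻¹ • (z - t • x) = -(x - t⁻¹ • z) := by
        rw [smul_sub, smul_smul, inv_mul_cancel₀ htpos.ne', one_smul]; abel
      rwa [heq] at this
    have h3 : x - t⁻¹ • z = 0 := hKsalient _ h1 h2
    have hxz : x = t⁻¹ • z := by
      have := sub_eq_zero.1 h3; exact this
    have hxsmall : ‖x‖ < ε / 2 := by
      rw [hxz, norm_smul, Real.norm_eq_abs, abs_of_pos (by positivity), inv_mul_eq_div]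
      exact hzlt
    have hnegx : -x ∈ K := by
      apply interior_subset (hball ?_)
      rw [Metric.mem_ball, dist_eq_norm]
      have : -x - x = -((2:ℝ) • x) := by module
      rw [this, norm_neg, norm_smul, Real.norm_eq_abs]
      rw [abs_of_pos (by norm_num : (0:ℝ) < 2)]
      linarith
    exact hx0 (hKsalient _ hxK hnegx)
  have hbddAbove : BddAbove S := ⟨2 * ‖z‖ / ε, fun t ht => hbdd t ht⟩
  -- S is closed
  have hSclosed : IsClosed S := by
    have h1 : IsClosed {t : ℝ | 0 ≤ t} := isClosed_le continuous_const continuous_id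
    have h2 : IsClosed ((fun t : ℝ => z - t • x) ⁻¹' K) :=
      hKclosed.preimage (continuous_const.sub (continuous_id.smul continuous_const))
    exact h1.inter h2
  set T : ℝ := sSup S with hT
  have hTS : T ∈ S := hSclosed.csSup_mem ⟨_, ht₀⟩ hbddAbove
  have hTpos : 0 < T := lt_of_lt_of_le (by positivity) (le_csSup hbddAbove ht₀)
  set w : X := z - T • x with hw
  rcases eq_or_ne w 0 with hw0 | hw0
  · -- z = T • x : then -y ∈ K, contradiction
    have hzx : z = T • x := by
      have := sub_eq_zero.1 hw0; exact this
    apply hy0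
    apply hKsalient _ hyK
    have hyeq : -y = ((r - lam) * T) • x := by
      rw [← hz, hzx]
      have : L (T • x) = T • (r • x) := by rw [map_smul, hLx]
      rw [this]
      module
    rw [hyeq]
    exact hKscale _ (by nlinarith) x hxK
  · -- L w ∈ interior K, push past the supremum
    have hwK : w ∈ K := hTS.2
    have hLw : L w ∈ interior K := hLsp w hwK hw0
    have hkey : lam • w = L w + y + ((r - lam) * T) • x := by
      have h1 : lam • z = L z + y := by rw [← hz]; abel
      have h2 : L w = L z - T • (r • x) := by
        rw [hw, map_sub, map_smul, hLx]
      rw [hw, h2, smul_sub, h1]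
      module
    have hlwint : lam • w ∈ interior K :=
      hkey ▸ hintadd _ (hintadd _ hLw _ hyK) _ (hKscale _ (by nlinarith) x hxK)
    obtain ⟨δ, hδ, hmem⟩ := hsubx _ hlwint
    have hnew : T + δ / lam ∈ S := by
      constructor
      · positivity
      · have := hKscale lam⁻¹ (by positivity) _ hmem
        have heq : lam⁻¹ • (lam • w - δ • x) = z - (T + δ / lam) • x := by
          rw [smul_sub, smul_smul, inv_mul_cancel₀ hlampos.ne', one_smul, smul_smul, hw]
          have hco : (T + δ / lam) • x = T • x + (lam⁻¹ * δ) • x := by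
            rw [add_smul]
            congr 1
            rw [div_eq_mul_inv, mul_comm]
          rw [hco]
          abel
        rwa [heq] at this
    have : T + δ / lam ≤ T := le_csSup hbddAbove hnew
    have : 0 < δ / lam := by positivity
    linarith
end

section
/- Let X be a real Banach space, K ⊆ X a cone with nonempty interior, and L : X → X a strongly positive bounded linear operator. Suppose r ∈ ℝ is an eigenvalue of L with an eigenvector x in the interior of K (L x = r x). Let y ∈ K \ {0}. Then the equation r·z − L z = y has no solution z ∈ X at all. -/
/-!
Since `0 ∉ int K`, the relation `r x = L x ∈ int K` forces `r > 0`. If `r z - L z = y`, then also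
`r u - L u = y` for every `u = z + t x`. As `x` is interior and `-x ∉ K`, the set of `t` with
`z + t x ∈ K` is closed, nonempty and bounded below. At its least element, `u` is a nonzero
point of `K` with `r u = L u + y ∈ int K + K ⊆ int K`, so `u` is interior and `t` could still be
decreased.
-/

open Filter Topology Set Pointwise

section Cone

variable {X : Type*} [AddCommGroup X] [Module ℝ X] {K : Set X}

theorem add_mem_of_convex_of_smul_mem (hKconv : Convex ℝ K)
    (hKscale : ∀ t : ℝ, 0 ≤ t → ∀ y ∈ K, t • y ∈ K) {a b : X} (ha : a ∈ K)
    (hb : b ∈ K) : a + b ∈ K := by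
  have hmid := hKconv ha hb (by norm_num : (0 : ℝ) ≤ 1 / 2) (by norm_num : (0 : ℝ) ≤ 1 / 2)
    (by norm_num)
  convert hKscale 2 zero_le_two _ hmid using 1
  module

variable [TopologicalSpace X]

theorem add_mem_interior_of_mem_interior [IsTopologicalAddGroup X] (hKconv : Convex ℝ K)
    (hKscale : ∀ t : ℝ, 0 ≤ t → ∀ y ∈ K, t • y ∈ K) {a b : X} (ha : a ∈ interior K)
    (hb : b ∈ K) : a + b ∈ interior K := by
  refine interior_maximal ?_ isOpen_interior.add_right (Set.add_mem_add ha hb)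
  rintro _ ⟨u, hu, v, hv, rfl⟩
  exact add_mem_of_convex_of_smul_mem hKconv hKscale (interior_subset hu) hv

theorem neg_notMem_of_mem_interior [IsTopologicalAddGroup X] (hKconv : Convex ℝ K)
    (hKscale : ∀ t : ℝ, 0 ≤ t → ∀ y ∈ K, t • y ∈ K) (h0 : (0 : X) ∉ interior K)
    {x : X} (hx : x ∈ interior K) : -x ∉ K := fun hnx =>
  h0 (add_neg_cancel x ▸ add_mem_interior_of_mem_interior hKconv hKscale hx hnx)

theorem smul_mem_interior_of_pos [ContinuousConstSMul ℝ X]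
    (hKscale : ∀ t : ℝ, 0 ≤ t → ∀ y ∈ K, t • y ∈ K) {c : ℝ}
    (hc : 0 < c) {a : X} (ha : a ∈ interior K) : c • a ∈ interior K := by
  have hsub : c • K ⊆ K := by
    rintro _ ⟨u, hu, rfl⟩
    exact hKscale c hc.le u hu
  exact interior_mono hsub ((interior_smul₀ hc.ne' K).symm ▸ Set.smul_mem_smul_set ha)

theorem mem_interior_of_smul_sub_mem [IsTopologicalAddGroup X] [ContinuousConstSMul ℝ X]
    (hKconv : Convex ℝ K) (hKscale : ∀ t : ℝ, 0 ≤ t → ∀ y ∈ K, t • y ∈ K) {r : ℝ}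
    (hr : 0 < r) {v w : X} (hw : w ∈ interior K) (hvw : r • v - w ∈ K) : v ∈ interior K := by
  have hrv : r • v ∈ interior K := by
    simpa using add_mem_interior_of_mem_interior hKconv hKscale hw hvw
  simpa [smul_smul, inv_mul_cancel₀ hr.ne'] using
    smul_mem_interior_of_pos hKscale (inv_pos.2 hr) hrv

theorem mem_of_zero_mem_interior [ContinuousSMul ℝ X]
    (hKscale : ∀ t : ℝ, 0 ≤ t → ∀ y ∈ K, t • y ∈ K)
    (h0 : (0 : X) ∈ interior K) (v : X) : v ∈ K := by
  have hv : ∀ᶠ c : ℝ in 𝓝[>] 0, c • v ∈ K := by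
    refine nhdsWithin_le_nhds ?_
    have : Tendsto (fun c : ℝ => c • v) (𝓝 0) (𝓝 0) :=
      (continuous_id.smul continuous_const).tendsto' 0 0 (zero_smul ℝ v)
    exact this (mem_interior_iff_mem_nhds.1 h0)
  obtain ⟨c, hcv, hc⟩ := (hv.and self_mem_nhdsWithin).exists
  simpa [smul_smul, inv_mul_cancel₀ hc.ne'] using hKscale c⁻¹ (inv_nonneg.2 hc.le) _ hcv

end Cone

section Ray

variable {X : Type*} [AddCommGroup X] [Module ℝ X] [TopologicalSpace X]
  [IsTopologicalAddGroup X] [ContinuousSMul ℝ X] {K : Set X} {x : X}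

theorem eventually_add_smul_mem_atTop (hKscale : ∀ t : ℝ, 0 ≤ t → ∀ y ∈ K, t • y ∈ K)
    (hx : x ∈ interior K) (z : X) : ∀ᶠ t : ℝ in atTop, z + t • x ∈ K := by
  have hlim : Tendsto (fun t : ℝ => t⁻¹ • z + x) atTop (𝓝 x) := by
    simpa using ((tendsto_inv_atTop_zero (𝕜 := ℝ)).smul_const z).add_const x
  filter_upwards [hlim (mem_interior_iff_mem_nhds.1 hx), eventually_gt_atTop 0] with t ht ht0
  convert hKscale t ht0.le _ ht using 1
  rw [smul_add, smul_smul, mul_inv_cancel₀ ht0.ne', one_smul, add_comm]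

theorem eventually_add_smul_notMem_atBot (hKclosed : IsClosed K)
    (hKscale : ∀ t : ℝ, 0 ≤ t → ∀ y ∈ K, t • y ∈ K) (hnx : -x ∉ K) (z : X) :
    ∀ᶠ t : ℝ in atBot, z + t • x ∉ K := by
  have hlim : Tendsto (fun t : ℝ => (-t)⁻¹ • z + -x) atBot (𝓝 (-x)) := by
    simpa using (((tendsto_inv_atTop_zero (𝕜 := ℝ)).comp tendsto_neg_atBot_atTop).smul_const
      z).add_const (-x)
  filter_upwards [hlim (hKclosed.isOpen_compl.mem_nhds hnx), eventually_lt_atBot 0]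
    with t ht ht0 hK
  refine ht ?_
  convert hKscale (-t)⁻¹ (by simpa using ht0.le) _ hK using 1
  show (-t)⁻¹ • z + -x = _
  rw [smul_add, smul_smul, inv_neg, neg_mul, inv_mul_cancel₀ ht0.ne, neg_one_smul]

theorem exists_isLeast_add_smul_mem (hKclosed : IsClosed K)
    (hKscale : ∀ t : ℝ, 0 ≤ t → ∀ y ∈ K, t • y ∈ K) (hx : x ∈ interior K) (hnx : -x ∉ K)
    (z : X) : ∃ t, IsLeast {t : ℝ | z + t • x ∈ K} t := by
  have hclosed : IsClosed {t : ℝ | z + t • x ∈ K} :=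
    hKclosed.preimage (continuous_const.add (continuous_id.smul continuous_const))
  obtain ⟨a, ha⟩ :=
    eventually_atBot.1 (eventually_add_smul_notMem_atBot hKclosed hKscale hnx z)
  exact ⟨_, hclosed.isLeast_csInf (eventually_add_smul_mem_atTop hKscale hx z).exists
    ⟨a, fun t ht => le_of_not_ge fun hta => ha t hta ht⟩⟩

theorem add_smul_notMem_interior_of_isLeast {z : X} {t : ℝ}
    (ht : IsLeast {t : ℝ | z + t • x ∈ K} t) : z + t • x ∉ interior K := fun hint => by
  have hcont : Continuous fun s : ℝ => z + s • x :=
    continuous_const.add (continuous_id.smul continuous_const)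
  have hnear : ∀ᶠ s in 𝓝 t, z + s • x ∈ interior K :=
    hcont.continuousAt.preimage_mem_nhds (isOpen_interior.mem_nhds hint)
  obtain ⟨s, hst, hs⟩ := hnear.exists_lt
  exact (ht.2 (show z + s • x ∈ K from interior_subset hs)).not_gt hst

end Ray

theorem resolvent_equation_no_solution_at_eigenvalue_general
    {X : Type*} [NormedAddCommGroup X] [NormedSpace ℝ X]
    (K : Set X)
    (hKclosed : IsClosed K)
    (hKconv : Convex ℝ K)
    (hKscale : ∀ t : ℝ, 0 ≤ t → ∀ y ∈ K, t • y ∈ K)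
    (hKsalient : ∀ y ∈ K, -y ∈ K → y = 0)
    (L : X →L[ℝ] X)
    (hLsp : ∀ y ∈ K, y ≠ 0 → L y ∈ interior K)
    (r : ℝ) (x : X) (hx : x ∈ interior K) (hLx : L x = r • x)
    (y : X) (hyK : y ∈ K) (hy0 : y ≠ 0) :
    ¬ ∃ z : X, r • z - L z = y := by
  rintro ⟨z, hz⟩
  have h0 : (0 : X) ∉ interior K := fun h0 =>
    hy0 (hKsalient y hyK (mem_of_zero_mem_interior hKscale h0 _))
  have hr : 0 < r := by
    by_contra! hr
    have hrx : r • x ∈ interior K :=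
      hLx ▸ hLsp x (interior_subset hx) (ne_of_mem_of_not_mem hx h0)
    exact neg_notMem_of_mem_interior hKconv hKscale h0 hrx
      (by simpa using hKscale (-r) (neg_nonneg.2 hr) x (interior_subset hx))
  obtain ⟨t, ht⟩ := exists_isLeast_add_smul_mem hKclosed hKscale hx
    (neg_notMem_of_mem_interior hKconv hKscale h0 hx) z
  have hu : r • (z + t • x) - L (z + t • x) = y := by
    rw [map_add, map_smul, hLx, ← hz]
    module
  have hu0 : z + t • x ≠ 0 := fun h => hy0 (by simpa [h] using hu.symm)
  exact add_smul_notMem_interior_of_isLeast ht <|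
    mem_interior_of_smul_sub_mem hKconv hKscale hr (hLsp _ ht.1 hu0) (hu ▸ hyK)

/-- Let `X` be a real Banach space, `K ⊆ X` a cone with nonempty
interior, and `L : X →L[ℝ] X` strongly positive.  Suppose `r` is an eigenvalue of `L` with
an eigenvector `x ∈ interior K`.  Let `y ∈ K \ {0}`.  Then the equation `r • z - L z = y`
has no solution `z ∈ X` at all. -/
theorem resolvent_equation_no_solution_at_eigenvalue
    {X : Type*} [NormedAddCommGroup X] [NormedSpace ℝ X] [CompleteSpace X]
    (K : Set X)
    (hKne : K.Nonempty)
    (hKclosed : IsClosed K)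
    (hKconv : Convex ℝ K)
    (hKscale : ∀ t : ℝ, 0 ≤ t → ∀ y ∈ K, t • y ∈ K)
    (hKsalient : ∀ y ∈ K, -y ∈ K → y = 0)
    (hKint : (interior K).Nonempty)
    (L : X →L[ℝ] X)
    (hLsp : ∀ y ∈ K, y ≠ 0 → L y ∈ interior K)
    (r : ℝ) (x : X) (hx : x ∈ interior K) (hx0 : x ≠ 0) (hLx : L x = r • x)
    (y : X) (hyK : y ∈ K) (hy0 : y ≠ 0) :
    ¬ ∃ z : X, r • z - L z = y :=
  resolvent_equation_no_solution_at_eigenvalue_general K hKclosed hKconv hKscale hKsalient L hLsp r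
    x hx hLx y hyK hy0
end
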